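/- Let H be a complex Hilbert space and S : H → H a bounded linear operator. Then there exists ε > 0 such that every densely defined closed operator t on H whose graph projection satisfies ‖P_{G(t)} − P_{G(S)}‖ < ε has domain Dom(t) equal to all of H (and hence t is a bounded operator). -/

import Mathlib

/-!
Parametrise `G(S)` by `ι x = (x, S x)` and put `A = π₁ ∘ P_{G(t)} ∘ ι`. Since `P_{G(S)}` fixes
`ι x`, we have `1 - A = π₁ ∘ (P_{G(S)} - P_{G(t)}) ∘ ι`, so `‖1 - A‖ ≤ ‖P_{G(t)} - P_{G(S)}‖ (1 + ‖S‖)`,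
which is `< 1` once `ε = (1 + ‖S‖)⁻¹`. Then `A` is invertible by the Neumann series, and every value
of `A` is the first coordinate of a point of `G(t)`, hence lies in `Dom(t)`.
-/

/-- The graph of a densely defined (partial) operator `t` on `H`, viewed as a submodule of
the Hilbert space `H ⊕ H` (the `ℓ²`-direct sum `WithLp 2 (H × H)`). -/
noncomputable def pmapGraph {H : Type*} [NormedAddCommGroup H] [InnerProductSpace ℂ H]
    (t : H →ₗ.[ℂ] H) : Submodule ℂ (WithLp 2 (H × H)) :=
  t.graph.comap (WithLp.linearEquiv 2 ℂ (H × H)).toLinearMap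

/-- The graph of a bounded operator `T : H → H`, viewed as a submodule of the Hilbert
space `H ⊕ H`. -/
noncomputable def boundedGraph {H : Type*} [NormedAddCommGroup H] [InnerProductSpace ℂ H]
    (T : H →L[ℂ] H) : Submodule ℂ (WithLp 2 (H × H)) :=
  (LinearMap.graph (T : H →ₗ[ℂ] H)).comap (WithLp.linearEquiv 2 ℂ (H × H)).toLinearMap

/-- `P` is the orthogonal projection of the Hilbert space `E` onto the subspace `G`:
it is the (unique) selfadjoint idempotent bounded operator with range `G`. -/
def IsOrthogonalProjectionOnto {E : Type*} [NormedAddCommGroup E] [InnerProductSpace ℂ E]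
    [CompleteSpace E] (P : E →L[ℂ] E) (G : Submodule ℂ E) : Prop :=
  IsSelfAdjoint P ∧ IsIdempotentElem P ∧ LinearMap.range (P : E →ₗ[ℂ] E) = G
section

open ContinuousLinearMap

theorem ContinuousLinearMap.surjective_of_norm_one_sub_lt_one {𝕜 E : Type*}
    [NontriviallyNormedField 𝕜] [NormedAddCommGroup E] [NormedSpace 𝕜 E] [CompleteSpace E]
    {A : E →L[𝕜] E} (h : ‖1 - A‖ < 1) : Function.Surjective A := by
  have hA : IsUnit A := sub_sub_cancel 1 A ▸ (Units.oneSub (1 - A) h).isUnit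
  exact (isUnit_iff_bijective.mp hA).surjective

theorem IsOrthogonalProjectionOnto.apply_eq_self {E : Type*} [NormedAddCommGroup E]
    [InnerProductSpace ℂ E] [CompleteSpace E] {P : E →L[ℂ] E} {G : Submodule ℂ E}
    (hP : IsOrthogonalProjectionOnto P G) {x : E} (hx : x ∈ G) : P x = x := by
  rw [← hP.2.2] at hx
  exact (LinearMap.IsIdempotentElem.mem_range_iff (IsIdempotentElem.toLinearMap hP.2.1)).mp hx

theorem IsOrthogonalProjectionOnto.apply_mem {E : Type*} [NormedAddCommGroup E]
    [InnerProductSpace ℂ E] [CompleteSpace E] {P : E →L[ℂ] E} {G : Submodule ℂ E}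
    (hP : IsOrthogonalProjectionOnto P G) (x : E) : P x ∈ G :=
  hP.2.2 ▸ LinearMap.mem_range_self _ x

variable {H : Type*} [NormedAddCommGroup H] [InnerProductSpace ℂ H]

theorem fst_mem_domain_of_mem_pmapGraph {t : H →ₗ.[ℂ] H} {z : WithLp 2 (H × H)}
    (hz : z ∈ pmapGraph t) : z.fst ∈ t.domain :=
  LinearPMap.mem_domain_of_mem_graph hz

noncomputable def graphMap (T : H →L[ℂ] H) : H →L[ℂ] WithLp 2 (H × H) :=
  (WithLp.prodContinuousLinearEquiv 2 ℂ H H).symm.toContinuousLinearMap.comp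
    ((ContinuousLinearMap.id ℂ H).prod T)

@[simp]
theorem graphMap_apply (T : H →L[ℂ] H) (x : H) : graphMap T x = WithLp.toLp 2 (x, T x) := rfl

theorem graphMap_mem_boundedGraph (T : H →L[ℂ] H) (x : H) : graphMap T x ∈ boundedGraph T :=
  (LinearMap.mem_graph_iff _ _).mpr rfl

theorem norm_graphMap_le (T : H →L[ℂ] H) : ‖graphMap T‖ ≤ 1 + ‖T‖ := by
  refine opNorm_le_bound _ (by positivity) fun x => ?_
  have hsplit : graphMap T x = WithLp.toLp 2 (x, 0) + WithLp.toLp 2 (0, T x) := by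
    simp only [graphMap_apply, ← WithLp.toLp_add, Prod.mk_add_mk, add_zero, zero_add]
  calc ‖graphMap T x‖ ≤ ‖x‖ + ‖T x‖ := by
        simpa only [hsplit, WithLp.norm_toLp_fst, WithLp.norm_toLp_snd] using
          norm_add_le (WithLp.toLp 2 (x, (0 : H))) (WithLp.toLp 2 ((0 : H), T x))
    _ ≤ (1 + ‖T‖) * ‖x‖ := by linarith [T.le_opNorm x]

theorem norm_fstL_le_one :
    ‖WithLp.fstL 2 ℂ H H‖ ≤ 1 :=
  opNorm_le_bound _ zero_le_one fun z => by simpa using WithLp.norm_fst_le (x := z)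

variable [CompleteSpace H]

theorem norm_one_sub_fstL_comp_graphMap_le {S : H →L[ℂ] H}
    {P Q : WithLp 2 (H × H) →L[ℂ] WithLp 2 (H × H)}
    (hQ : IsOrthogonalProjectionOnto Q (boundedGraph S)) :
    ‖1 - (WithLp.fstL 2 ℂ H H).comp (P.comp (graphMap S))‖ ≤ ‖P - Q‖ * (1 + ‖S‖) := by
  have hfix : 1 - (WithLp.fstL 2 ℂ H H).comp (P.comp (graphMap S)) =
      (WithLp.fstL 2 ℂ H H).comp ((Q - P).comp (graphMap S)) := by
    ext x
    have hx := hQ.apply_eq_self (graphMap_mem_boundedGraph S x)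
    rw [graphMap_apply] at hx
    simp [hx]
  calc _ = ‖(WithLp.fstL 2 ℂ H H).comp ((Q - P).comp (graphMap S))‖ := by rw [hfix]
    _ ≤ 1 * (‖Q - P‖ * (1 + ‖S‖)) := by
        refine (opNorm_comp_le _ _).trans
          (mul_le_mul norm_fstL_le_one ?_ (by positivity) zero_le_one)
        exact (opNorm_comp_le _ _).trans (by gcongr; exact norm_graphMap_le S)
    _ = ‖P - Q‖ * (1 + ‖S‖) := by rw [one_mul, norm_sub_rev]

end

/-- Let `H` be a complex Hilbert space and `S : H → H` a bounded linear operator. Then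
there exists `ε > 0` such that every densely defined closed operator `t` on `H` whose
graph projection satisfies `‖P_{G(t)} − P_{G(S)}‖ < ε` has domain all of `H`. -/
theorem stmt_7 {H : Type*} [NormedAddCommGroup H] [InnerProductSpace ℂ H] [CompleteSpace H]
    (S : H →L[ℂ] H) :
    ∃ ε > (0 : ℝ), ∀ t : H →ₗ.[ℂ] H,
      Dense (t.domain : Set H) → IsClosed (t.graph : Set (H × H)) →
      ∀ Pt PS : WithLp 2 (H × H) →L[ℂ] WithLp 2 (H × H),
        IsOrthogonalProjectionOnto Pt (pmapGraph t) →
        IsOrthogonalProjectionOnto PS (boundedGraph S) →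
        ‖Pt - PS‖ < ε → t.domain = ⊤ := by
  refine ⟨(1 + ‖S‖)⁻¹, by positivity, fun t _ _ Pt PS hPt hPS hclose => ?_⟩
  set A := (WithLp.fstL 2 ℂ H H).comp (Pt.comp (graphMap S))
  have hA : ‖1 - A‖ < 1 :=
    calc ‖1 - A‖ ≤ ‖Pt - PS‖ * (1 + ‖S‖) := norm_one_sub_fstL_comp_graphMap_le hPS
      _ < (1 + ‖S‖)⁻¹ * (1 + ‖S‖) := by gcongr
      _ = 1 := inv_mul_cancel₀ (by positivity)
  refine eq_top_iff.mpr fun y _ => ?_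
  obtain ⟨x, rfl⟩ := ContinuousLinearMap.surjective_of_norm_one_sub_lt_one hA y
  exact fst_mem_domain_of_mem_pmapGraph (hPt.apply_mem (graphMap S x))
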